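/- Let I be an ideal on ℕ which is not countably generated. Equip X = I with the topology generated by taking as a basis of closed sets ∅ together with the sets X_A = {J ∈ I : J ⊆ A} for A ∈ I. Then: (1) every X_A is nowhere dense in X; (2) X is of second category in itself; (3) ⋃_{A ∈ I} X_A = X. Hence I is not a Baire ideal for X. -/

import Mathlib

open scoped ENNReal Cardinal

/-- An ideal on ℕ containing all finite sets, closed under subsets and finite
unions, with `ℕ ∉ I`. -/
def IsIdealOn (I : Set (Set ℕ)) : Prop :=
  Set.univ ∉ I ∧ (∀ A ∈ I, ∀ B, B ⊆ A → B ∈ I) ∧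
    (∀ A ∈ I, ∀ B ∈ I, A ∪ B ∈ I) ∧ (∀ A : Set ℕ, A.Finite → A ∈ I)

/-- `β` is a basis of the ideal `I`: a cofinal (under inclusion) subfamily. -/
def IsIdealBasis (I β : Set (Set ℕ)) : Prop := β ⊆ I ∧ ∀ A ∈ I, ∃ B ∈ β, A ⊆ B

/-- `I` is a Baire ideal for the topological space `X`: for every monotone family of
nowhere dense subsets of `X` indexed by `I`, the union is not all of `X`. -/
def IsBaireIdealFor (I : Set (Set ℕ)) (X : Type*) [TopologicalSpace X] : Prop :=
  ∀ f : Set ℕ → Set X, (∀ A ∈ I, IsNowhereDense (f A)) →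
    (∀ A ∈ I, ∀ B ∈ I, A ⊆ B → f A ⊆ f B) → (⋃ A ∈ I, f A) ≠ Set.univ

/-!
Every neighbourhood of a point of `X = I` contains a basic open set `(subsetsIn I B)ᶜ` with
`B ∈ I`, and no such set fits inside `subsetsIn I A` for `A ∈ I`, since `I` contains a singleton
outside `A ∪ B`. Hence each `subsetsIn I A` is nowhere dense, and conversely every nowhere dense
set, whose closure misses some basic open set, lies inside a single `subsetsIn I B`. A countable
cover of `X` by nowhere dense sets would thus give countably many `B ∈ I` that are cofinal in
`I`, so `X` is not meagre, while the monotone family `A ↦ subsetsIn I A` covers `X`.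
-/

open Set TopologicalSpace

section IdealTopology

variable {α : Type*} {I : Set (Set α)}

variable (I) in
def subsetsIn (A : Set α) : Set I := {J | (J : Set α) ⊆ A}

variable (I) in
abbrev idealTopology : TopologicalSpace I :=
  generateFrom {U | ∃ A ∈ I, U = (subsetsIn I A)ᶜ}

attribute [local instance] idealTopology

theorem mem_subsetsIn {A : Set α} {J : I} : J ∈ subsetsIn I A ↔ (J : Set α) ⊆ A := Iff.rfl

theorem subsetsIn_mono {A B : Set α} (h : A ⊆ B) : subsetsIn I A ⊆ subsetsIn I B :=
  fun _ hJ => hJ.trans h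

theorem iUnion_subsetsIn : ⋃ A ∈ I, subsetsIn I A = univ :=
  eq_univ_of_forall fun J => mem_biUnion J.2 (mem_subsetsIn.2 subset_rfl)

theorem isClosed_subsetsIn {A : Set α} (hA : A ∈ I) : IsClosed (subsetsIn I A) :=
  ⟨GenerateOpen.basic _ ⟨A, hA, rfl⟩⟩

theorem exists_compl_subsetsIn_subset (hunion : ∀ A ∈ I, ∀ B ∈ I, A ∪ B ∈ I)
    {U : Set I} (hU : IsOpen U) {J : I} (hJ : J ∈ U) : ∃ B ∈ I, (subsetsIn I B)ᶜ ⊆ U := by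
  induction hU with
  | basic U hU =>
    obtain ⟨A, hA, rfl⟩ := hU
    exact ⟨A, hA, subset_rfl⟩
  | univ => exact ⟨J, J.2, subset_univ _⟩
  | inter U V _ _ ihU ihV =>
    obtain ⟨B₁, hB₁, h₁⟩ := ihU hJ.1
    obtain ⟨B₂, hB₂, h₂⟩ := ihV hJ.2
    refine ⟨B₁ ∪ B₂, hunion _ hB₁ _ hB₂, subset_inter ?_ ?_⟩
    · exact (compl_subset_compl.2 (subsetsIn_mono subset_union_left)).trans h₁
    · exact (compl_subset_compl.2 (subsetsIn_mono subset_union_right)).trans h₂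
  | sUnion S _ ih =>
    obtain ⟨V, hV, hJV⟩ := hJ
    obtain ⟨B, hB, h⟩ := ih V hV hJV
    exact ⟨B, hB, h.trans (subset_sUnion_of_mem hV)⟩

theorem isNowhereDense_subsetsIn (huniv : univ ∉ I) (hunion : ∀ A ∈ I, ∀ B ∈ I, A ∪ B ∈ I)
    (hsingleton : ∀ n, {n} ∈ I) {A : Set α} (hA : A ∈ I) : IsNowhereDense (subsetsIn I A) := by
  rw [(isClosed_subsetsIn hA).isNowhereDense_iff, eq_empty_iff_forall_notMem]
  intro J hJ
  obtain ⟨B, hB, hBA⟩ := exists_compl_subsetsIn_subset hunion isOpen_interior hJ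
  obtain ⟨n, hn⟩ : ∃ n, n ∉ A ∪ B :=
    not_forall.1 fun h => huniv (eq_univ_of_forall h ▸ hunion _ hA _ hB)
  have hnB : (⟨{n}, hsingleton n⟩ : I) ∈ (subsetsIn I B)ᶜ := fun h => hn (Or.inr (h rfl))
  exact hn (Or.inl (interior_subset (hBA hnB) rfl))

theorem IsNowhereDense.exists_subset_subsetsIn (hunion : ∀ A ∈ I, ∀ B ∈ I, A ∪ B ∈ I)
    [Nonempty I] {s : Set I} (hs : IsNowhereDense s) : ∃ B ∈ I, s ⊆ subsetsIn I B := by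
  obtain ⟨J, hJ⟩ : (closure s)ᶜ.Nonempty := by
    rw [nonempty_compl]
    intro h
    rw [IsNowhereDense, h, interior_univ] at hs
    exact univ_nonempty.ne_empty hs
  obtain ⟨B, hB, hBs⟩ := exists_compl_subsetsIn_subset hunion isClosed_closure.isOpen_compl hJ
  exact ⟨B, hB, subset_closure.trans (compl_subset_compl.1 hBs)⟩

end IdealTopology

attribute [local instance] idealTopology

theorem exists_countable_isIdealBasis_of_isMeagre_univ {I : Set (Set ℕ)}
    (hunion : ∀ A ∈ I, ∀ B ∈ I, A ∪ B ∈ I) [Nonempty I] (h : IsMeagre (univ : Set I)) :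
    ∃ β : Set (Set ℕ), IsIdealBasis I β ∧ β.Countable := by
  obtain ⟨S, hS, hSc, hcover⟩ := isMeagre_iff_countable_union_isNowhereDense.1 h
  choose B hBI hsB using fun s hs => (hS s hs).exists_subset_subsetsIn hunion
  have : Countable S := hSc.to_subtype
  refine ⟨range fun s : S => B s s.2, ⟨?_, fun A hA => ?_⟩, countable_range _⟩
  · rintro _ ⟨s, rfl⟩
    exact hBI s s.2
  · obtain ⟨s, hs, hAs⟩ := hcover (mem_univ ⟨A, hA⟩)
    exact ⟨B s hs, ⟨⟨s, hs⟩, rfl⟩, hsB s hs hAs⟩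

/-- For a not countably generated ideal `I`, the space `X = I` with the topology whose
basic closed sets are the `X_A = {J ∈ I : J ⊆ A}` satisfies: every `X_A` is nowhere
dense, `X` is of second category in itself, the `X_A` cover `X`, and hence `I` is not a
Baire ideal for `X`. -/
theorem stmt_4 (I : Set (Set ℕ)) (hI : IsIdealOn I)
    (hnc : ¬ ∃ β : Set (Set ℕ), IsIdealBasis I β ∧ β.Countable)
    (XA : Set ℕ → Set {J : Set ℕ // J ∈ I})
    (hXA : ∀ A : Set ℕ, XA A = {J : {J : Set ℕ // J ∈ I} | (J : Set ℕ) ⊆ A})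
    (t : TopologicalSpace {J : Set ℕ // J ∈ I})
    (ht : t = TopologicalSpace.generateFrom {U | ∃ A ∈ I, U = (XA A)ᶜ}) :
    (∀ A ∈ I, @IsNowhereDense _ t (XA A)) ∧
      ¬ @IsMeagre _ t (Set.univ : Set {J : Set ℕ // J ∈ I}) ∧
      (⋃ A ∈ I, XA A) = Set.univ ∧
      ¬ @IsBaireIdealFor I {J : Set ℕ // J ∈ I} t := by
  obtain ⟨huniv, -, hunion, hfin⟩ := hI
  obtain rfl : XA = subsetsIn I := funext hXA
  obtain rfl : t = idealTopology I := ht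
  have : Nonempty I := ⟨⟨∅, hfin ∅ finite_empty⟩⟩
  have hnwd A (hA : A ∈ I) : IsNowhereDense (subsetsIn I A) :=
    isNowhereDense_subsetsIn huniv hunion (fun n => hfin _ (finite_singleton n)) hA
  refine ⟨hnwd, fun h => hnc (exists_countable_isIdealBasis_of_isMeagre_univ hunion h),
    iUnion_subsetsIn, fun hBaire => ?_⟩
  exact hBaire _ hnwd (fun _ _ _ _ => subsetsIn_mono) iUnion_subsetsIn
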